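/- arXiv:2310.10576 — 3 statements merged into one kernel-verified Lean document; each statement's English description precedes it below -/
import Mathlib

section
/- In an implicative algebra, the encoding of the combinator s = λx.λy.λz.xz(yz) equals S = ⋀_{a,b,c∈A}((a → (b → c)) → ((a → b) → (a → c))). -/
universe u v

/-- An implicative algebra: a complete lattice with an implication antitone in the
first argument, monotone in the second, distributing over arbitrary meets in the
second argument, together with a separator `Sep` which is upward closed, closed
under modus ponens, and contains the combinators K and S. -/
structure ImplicativeAlgebra (A : Type u) [CompleteLattice A] where
  imp : A → A → A
  imp_anti : ∀ ⦃a a' b : A⦄, a ≤ a' → imp a' b ≤ imp a b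
  imp_mono : ∀ ⦃a b b' : A⦄, b ≤ b' → imp a b ≤ imp a b'
  imp_sInf : ∀ (a : A) (S : Set A), imp a (sInf S) = ⨅ b ∈ S, imp a b
  Sep : Set A
  sep_upward : ∀ ⦃a b : A⦄, a ∈ Sep → a ≤ b → b ∈ Sep
  sep_mp : ∀ ⦃a b : A⦄, imp a b ∈ Sep → a ∈ Sep → b ∈ Sep
  sep_K : (⨅ a : A, ⨅ b : A, imp a (imp b a)) ∈ Sep
  sep_S : (⨅ a : A, ⨅ b : A, ⨅ c : A,
      imp (imp a (imp b c)) (imp (imp a b) (imp a c))) ∈ Sep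

namespace ImplicativeAlgebra

variable {A : Type u} [CompleteLattice A] (𝔸 : ImplicativeAlgebra A)

/-- Application: `a · b := ⋀ {x | a ≤ b → x}`. -/
def app (a b : A) : A := sInf {x : A | a ≤ 𝔸.imp b x}

/-- Implicative conjunction `a × b`. -/
def itimes (a b : A) : A := ⨅ x : A, 𝔸.imp (𝔸.imp a (𝔸.imp b x)) x

/-- Implicative disjunction `a + b`. -/
def iplus (a b : A) : A := ⨅ x : A, 𝔸.imp (𝔸.imp a x) (𝔸.imp (𝔸.imp b x) x)

/-- Second-order encoding of the existential quantifier. -/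
def iexists {ι : Sort v} (f : ι → A) : A := ⨅ x : A, 𝔸.imp (⨅ i, 𝔸.imp (f i) x) x

/-- Encoding of k = λx.λy.x. -/
def kComb : A := ⨅ a : A, 𝔸.imp a (⨅ b : A, 𝔸.imp b a)

/-- Encoding of λx.λy.y. -/
def kbarComb : A := ⨅ a : A, 𝔸.imp a (⨅ b : A, 𝔸.imp b b)

/-- Encoding of the pairing combinator p = λx.λy.λz.zxy. -/
def pComb : A := ⨅ a : A, 𝔸.imp a (⨅ b : A, 𝔸.imp b (⨅ c : A, 𝔸.imp c (𝔸.app (𝔸.app c a) b)))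

/-- Encoding of the first projection p₁ = λu.u k. -/
def p1Comb : A := ⨅ u : A, 𝔸.imp u (𝔸.app u 𝔸.kComb)

/-- Encoding of the second projection p₂ = λv.v k̄. -/
def p2Comb : A := ⨅ u : A, 𝔸.imp u (𝔸.app u 𝔸.kbarComb)

/-- Encoding of the existential-introduction combinator e = λx.λz.zx. -/
def eComb : A := ⨅ a : A, 𝔸.imp a (⨅ c : A, 𝔸.imp c (𝔸.app c a))

end ImplicativeAlgebra

/-- λ-terms with constant parameters in `A` (de Bruijn indices). -/
inductive Term (A : Type u) : Type u
  | var : ℕ → Term A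
  | param : A → Term A
  | app : Term A → Term A → Term A
  | lam : Term A → Term A

/-- Extend an environment with a new value for the variable `0`. -/
def consEnv {A : Type u} (a : A) (ρ : ℕ → A) : ℕ → A
  | 0 => a
  | n + 1 => ρ n

/-- The encoding of λ-terms with parameters in `A` as elements of `A`
(relative to an environment interpreting the free variables). -/
def Term.eval {A : Type u} [CompleteLattice A] (𝔸 : ImplicativeAlgebra A) :
    Term A → (ℕ → A) → A
  | .var n, ρ => ρ n
  | .param a, _ => a
  | .app t s, ρ => 𝔸.app (Term.eval 𝔸 t ρ) (Term.eval 𝔸 s ρ)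
  | .lam t, ρ => ⨅ a : A, 𝔸.imp a (Term.eval 𝔸 t (consEnv a ρ))

/-!
Application is left adjoint to implication: `a · b ≤ c ↔ a ≤ b → c`. So for `x = a → b → c`,
`y = a → b` and `z = a` we get `x z (y z) ≤ (b → c) b ≤ c`, which bounds the encoding of `s` by
`S`. Conversely `x ≤ z → y z → x z (y z)` and `y ≤ z → y z`, so the instance of `S` at
`z`, `y z`, `x z (y z)` lies below `x → y → z → x z (y z)`.
-/

namespace ImplicativeAlgebra

variable {A : Type u} [CompleteLattice A] (𝔸 : ImplicativeAlgebra A)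

theorem imp_le_imp {a a' b b' : A} (ha : a' ≤ a) (hb : b ≤ b') :
    𝔸.imp a b ≤ 𝔸.imp a' b' :=
  (𝔸.imp_anti ha).trans (𝔸.imp_mono hb)

theorem imp_iInf {ι : Sort v} (a : A) (f : ι → A) :
    𝔸.imp a (⨅ i, f i) = ⨅ i, 𝔸.imp a (f i) := by
  rw [iInf, 𝔸.imp_sInf, iInf_range]

theorem le_imp_app (a b : A) : a ≤ 𝔸.imp b (𝔸.app a b) := by
  rw [app, 𝔸.imp_sInf]
  exact le_iInf₂ fun _ hx => hx

theorem app_le_iff {a b c : A} : 𝔸.app a b ≤ c ↔ a ≤ 𝔸.imp b c :=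
  ⟨fun h => (𝔸.le_imp_app a b).trans (𝔸.imp_mono h), fun h => sInf_le h⟩

theorem app_imp_le (a b : A) : 𝔸.app (𝔸.imp a b) a ≤ b :=
  𝔸.app_le_iff.mpr le_rfl

theorem app_mono {a a' b b' : A} (ha : a ≤ a') (hb : b ≤ b') :
    𝔸.app a b ≤ 𝔸.app a' b' :=
  𝔸.app_le_iff.mpr (ha.trans ((𝔸.le_imp_app a' b').trans (𝔸.imp_anti hb)))

end ImplicativeAlgebra

/-- In an implicative algebra, the encoding of the combinator
s = λx.λy.λz.xz(yz) equals S = ⋀_{a,b,c∈A}((a → (b → c)) → ((a → b) → (a → c))). -/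
theorem sComb_eq_S {A : Type u} [CompleteLattice A] (𝔸 : ImplicativeAlgebra A)
    (ρ : ℕ → A) :
    Term.eval 𝔸
        (.lam (.lam (.lam (.app (.app (.var 2) (.var 0)) (.app (.var 1) (.var 0)))))) ρ =
      ⨅ a : A, ⨅ b : A, ⨅ c : A,
        𝔸.imp (𝔸.imp a (𝔸.imp b c)) (𝔸.imp (𝔸.imp a b) (𝔸.imp a c)) := by
  simp only [Term.eval, consEnv]
  apply le_antisymm
  · refine le_iInf fun a => le_iInf fun b => le_iInf fun c => ?_
    refine iInf_le_of_le (𝔸.imp a (𝔸.imp b c)) (𝔸.imp_mono ?_)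
    refine iInf_le_of_le (𝔸.imp a b) (𝔸.imp_mono ?_)
    refine iInf_le_of_le a (𝔸.imp_mono ?_)
    exact (𝔸.app_mono (𝔸.app_imp_le _ _) (𝔸.app_imp_le _ _)).trans (𝔸.app_imp_le _ _)
  · simp only [𝔸.imp_iInf]
    refine le_iInf fun x => le_iInf fun y => le_iInf fun z => ?_
    have hx : x ≤ 𝔸.imp z (𝔸.imp (𝔸.app y z) (𝔸.app (𝔸.app x z) (𝔸.app y z))) :=
      (𝔸.le_imp_app x z).trans (𝔸.imp_mono (𝔸.le_imp_app _ _))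
    refine iInf_le_of_le z (iInf_le_of_le (𝔸.app y z) ?_)
    exact iInf_le_of_le (𝔸.app (𝔸.app x z) (𝔸.app y z))
      (𝔸.imp_le_imp hx (𝔸.imp_anti (𝔸.le_imp_app y z)))
end

section
/- In an implicative algebra, the encoded existential quantifier satisfies: e := λx.λz.zx satisfies e ∈ Σ and e ≤ a_j → ⟆∃_{i∈I} a_i for every j ∈ I, and ⟆∃_{i∈I} a_i ≤ (⋀_{i∈I}(a_i → b)) → b for every b ∈ A. -/
universe u v

/-!
`e` lies above the SK-term `S (K (S I)) K`, which reduces like `λx.λz.zx` and lies in `Σ` because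
`Σ` contains `S` and `K` and is closed under application. For the introduction rule, instantiate
`z := ⋀ᵢ (aᵢ → x)`: then `z · aⱼ ≤ x`. The elimination rule is the instance `x := b` of the meet
defining `⟆∃`.
-/

namespace ImplicativeAlgebra

variable {A : Type u} [CompleteLattice A] (𝔸 : ImplicativeAlgebra A)

theorem app_mem_sep {a b : A} (ha : a ∈ 𝔸.Sep) (hb : b ∈ 𝔸.Sep) : 𝔸.app a b ∈ 𝔸.Sep :=
  𝔸.sep_mp (𝔸.sep_upward ha (𝔸.le_imp_app a b)) hb

theorem le_imp_iInf {ι : Sort*} {c a : A} {f : ι → A} (h : ∀ i, c ≤ 𝔸.imp a (f i)) :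
    c ≤ 𝔸.imp a (⨅ i, f i) := by
  rw [← sInf_range, 𝔸.imp_sInf]
  exact le_iInf₂ fun _ ⟨i, hi⟩ => hi ▸ h i

theorem kComb_mem_sep : 𝔸.kComb ∈ 𝔸.Sep :=
  𝔸.sep_upward 𝔸.sep_K <| le_iInf fun a => 𝔸.le_imp_iInf fun b =>
    (iInf_le _ a).trans (iInf_le _ b)

theorem app_app_kComb_le (a b : A) : 𝔸.app (𝔸.app 𝔸.kComb a) b ≤ a := by
  rw [app_le_iff, app_le_iff]
  exact (iInf_le _ a).trans (𝔸.imp_mono (iInf_le _ b))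

def sComb : A :=
  ⨅ a : A, ⨅ b : A, ⨅ c : A, 𝔸.imp (𝔸.imp a (𝔸.imp b c)) (𝔸.imp (𝔸.imp a b) (𝔸.imp a c))

theorem sComb_mem_sep : 𝔸.sComb ∈ 𝔸.Sep :=
  𝔸.sep_S

theorem app_app_app_sComb_le (f g x : A) :
    𝔸.app (𝔸.app (𝔸.app 𝔸.sComb f) g) x ≤ 𝔸.app (𝔸.app f x) (𝔸.app g x) := by
  set y := 𝔸.app (𝔸.app f x) (𝔸.app g x)
  rw [app_le_iff, app_le_iff, app_le_iff]
  have hS : 𝔸.sComb ≤ 𝔸.imp (𝔸.imp x (𝔸.imp (𝔸.app g x) y))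
      (𝔸.imp (𝔸.imp x (𝔸.app g x)) (𝔸.imp x y)) :=
    ((iInf_le _ x).trans (iInf_le _ (𝔸.app g x))).trans (iInf_le _ y)
  have hf : f ≤ 𝔸.imp x (𝔸.imp (𝔸.app g x) y) :=
    (𝔸.le_imp_app f x).trans (𝔸.imp_mono (𝔸.le_imp_app _ _))
  exact (hS.trans (𝔸.imp_anti hf)).trans (𝔸.imp_mono (𝔸.imp_anti (𝔸.le_imp_app g x)))

def iComb : A :=
  𝔸.app (𝔸.app 𝔸.sComb 𝔸.kComb) 𝔸.kComb

theorem iComb_mem_sep : 𝔸.iComb ∈ 𝔸.Sep :=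
  𝔸.app_mem_sep (𝔸.app_mem_sep 𝔸.sComb_mem_sep 𝔸.kComb_mem_sep) 𝔸.kComb_mem_sep

theorem app_iComb_le (x : A) : 𝔸.app 𝔸.iComb x ≤ x :=
  (𝔸.app_app_app_sComb_le _ _ x).trans (𝔸.app_app_kComb_le x _)

def eCombSK : A :=
  𝔸.app (𝔸.app 𝔸.sComb (𝔸.app 𝔸.kComb (𝔸.app 𝔸.sComb 𝔸.iComb))) 𝔸.kComb

theorem eCombSK_mem_sep : 𝔸.eCombSK ∈ 𝔸.Sep := by
  have hSI := 𝔸.app_mem_sep 𝔸.sComb_mem_sep 𝔸.iComb_mem_sep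
  exact 𝔸.app_mem_sep (𝔸.app_mem_sep 𝔸.sComb_mem_sep (𝔸.app_mem_sep 𝔸.kComb_mem_sep hSI))
    𝔸.kComb_mem_sep

theorem app_app_eCombSK_le (a c : A) : 𝔸.app (𝔸.app 𝔸.eCombSK a) c ≤ 𝔸.app c a := by
  set SI := 𝔸.app 𝔸.sComb 𝔸.iComb
  have h : 𝔸.app 𝔸.eCombSK a ≤ 𝔸.app SI (𝔸.app 𝔸.kComb a) :=
    (𝔸.app_app_app_sComb_le _ _ a).trans (𝔸.app_mono (𝔸.app_app_kComb_le _ a) le_rfl)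
  calc 𝔸.app (𝔸.app 𝔸.eCombSK a) c
      ≤ 𝔸.app (𝔸.app SI (𝔸.app 𝔸.kComb a)) c := 𝔸.app_mono h le_rfl
    _ ≤ 𝔸.app (𝔸.app 𝔸.iComb c) (𝔸.app (𝔸.app 𝔸.kComb a) c) := 𝔸.app_app_app_sComb_le _ _ c
    _ ≤ 𝔸.app c a := 𝔸.app_mono (𝔸.app_iComb_le c) (𝔸.app_app_kComb_le a c)

theorem eCombSK_le_eComb : 𝔸.eCombSK ≤ 𝔸.eComb :=
  le_iInf fun a => (𝔸.app_le_iff).1 <| le_iInf fun c => (𝔸.app_le_iff).1 <|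
    𝔸.app_app_eCombSK_le a c

theorem eComb_mem_sep : 𝔸.eComb ∈ 𝔸.Sep :=
  𝔸.sep_upward 𝔸.eCombSK_mem_sep 𝔸.eCombSK_le_eComb

theorem eComb_le_imp_iexists {ι : Sort v} (f : ι → A) (j : ι) :
    𝔸.eComb ≤ 𝔸.imp (f j) (𝔸.iexists f) := by
  refine (iInf_le _ (f j)).trans (𝔸.imp_mono (le_iInf fun x => ?_))
  have hz : 𝔸.app (⨅ i, 𝔸.imp (f i) x) (f j) ≤ x := (𝔸.app_le_iff).2 (iInf_le _ j)
  exact (iInf_le _ (⨅ i, 𝔸.imp (f i) x)).trans (𝔸.imp_mono hz)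

end ImplicativeAlgebra

/-- the combinator e = λx.λz.zx belongs to Σ, realizes the
introduction rule of the encoded existential quantifier, and the encoded
existential quantifier satisfies its elimination rule. -/
theorem iexists_intro_elim {A : Type u} [CompleteLattice A]
    (𝔸 : ImplicativeAlgebra A) :
    𝔸.eComb ∈ 𝔸.Sep ∧
      (∀ (ι : Type v) (f : ι → A) (j : ι), 𝔸.eComb ≤ 𝔸.imp (f j) (𝔸.iexists f)) ∧
      (∀ (ι : Type v) (f : ι → A) (b : A),
        𝔸.iexists f ≤ 𝔸.imp (⨅ i, 𝔸.imp (f i) b) b) :=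
  ⟨𝔸.eComb_mem_sep, fun _ f j => 𝔸.eComb_le_imp_iexists f j, fun _ _ b => iInf_le _ b⟩
end

section
/- Every total combinatory algebra (R, ·) gives rise to an implicative algebra (𝒫(R), ⊆, ⇒, 𝒫(R)∖{∅}), where A ⇒ B := {r ∈ R | r·a ∈ B for all a ∈ A}. -/
universe u v

/-- A total combinatory algebra. -/
structure CombAlg (R : Type u) where
  op : R → R → R
  k : R
  s : R
  k_spec : ∀ x y : R, op (op k x) y = x
  s_spec : ∀ x y z : R, op (op (op s x) y) z = op (op x z) (op y z)

/-! The separator axioms are the realizability reading of the combinator equations: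
application realizes modus ponens, and `k`, `s` realize every instance of K and S. -/

section ArrowSet

variable {R : Type u} (op : R → R → R)

def arrowSet (X Y : Set R) : Set R := {r | ∀ a ∈ X, op r a ∈ Y}

variable {op}

theorem mem_arrowSet {X Y : Set R} {r : R} : r ∈ arrowSet op X Y ↔ ∀ a ∈ X, op r a ∈ Y :=
  Iff.rfl

theorem arrowSet_anti {X X' Y : Set R} (h : X ⊆ X') : arrowSet op X' Y ⊆ arrowSet op X Y :=
  fun _ hr a ha => hr a (h ha)

theorem arrowSet_mono {X Y Y' : Set R} (h : Y ⊆ Y') : arrowSet op X Y ⊆ arrowSet op X Y' :=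
  fun _ hr a ha => h (hr a ha)

theorem arrowSet_sInf (X : Set R) (S : Set (Set R)) :
    arrowSet op X (sInf S) = ⨅ Y ∈ S, arrowSet op X Y := by
  ext r
  simp only [mem_arrowSet, Set.sInf_eq_sInter, Set.mem_sInter, Set.iInf_eq_iInter,
    Set.mem_iInter]
  exact forall₂_comm

theorem Set.Nonempty.of_arrowSet {X Y : Set R} (hXY : (arrowSet op X Y).Nonempty)
    (hX : X.Nonempty) : Y.Nonempty :=
  let ⟨r, hr⟩ := hXY
  let ⟨a, ha⟩ := hX
  ⟨op r a, hr a ha⟩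

end ArrowSet

namespace CombAlg

variable {R : Type u} (C : CombAlg R)

theorem k_mem_arrowSet :
    C.k ∈ ⨅ X : Set R, ⨅ Y : Set R, arrowSet C.op X (arrowSet C.op Y X) := by
  simp only [Set.iInf_eq_iInter, Set.mem_iInter, mem_arrowSet]
  intro X Y x hx y _
  rwa [C.k_spec]

theorem s_mem_arrowSet :
    C.s ∈ ⨅ X : Set R, ⨅ Y : Set R, ⨅ Z : Set R,
      arrowSet C.op (arrowSet C.op X (arrowSet C.op Y Z))
        (arrowSet C.op (arrowSet C.op X Y) (arrowSet C.op X Z)) := by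
  simp only [Set.iInf_eq_iInter, Set.mem_iInter, mem_arrowSet]
  intro X Y Z f hf g hg x hx
  rw [C.s_spec]
  exact hf x hx (C.op g x) (hg x hx)

def implicativeAlgebra : ImplicativeAlgebra (Set R) where
  imp := arrowSet C.op
  imp_anti _ _ _ := arrowSet_anti
  imp_mono _ _ _ := arrowSet_mono
  imp_sInf := arrowSet_sInf
  Sep := {X | X.Nonempty}
  sep_upward _ _ ha hab := ha.mono hab
  sep_mp _ _ := Set.Nonempty.of_arrowSet
  sep_K := ⟨C.k, C.k_mem_arrowSet⟩
  sep_S := ⟨C.s, C.s_mem_arrowSet⟩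

end CombAlg

/-- every total combinatory algebra (R, ·) gives rise to an
implicative algebra (𝒫(R), ⊆, ⇒, 𝒫(R) ∖ {∅}) where
A ⇒ B := {r | r·a ∈ B for all a ∈ A}. -/
theorem combAlg_implicativeAlgebra {R : Type u} (C : CombAlg R) :
    ∃ 𝔸 : ImplicativeAlgebra (Set R),
      𝔸.imp = (fun X Y => {r : R | ∀ a ∈ X, C.op r a ∈ Y}) ∧
      𝔸.Sep = {X : Set R | X.Nonempty} :=
  ⟨C.implicativeAlgebra, rfl, rfl⟩
end
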